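/- Consider the Markov chain X_0, X_1, ..., X_s on nonnegative integers with parameters α ∈ (0, α_0) (α_0 a sufficiently small constant) and threshold G, where: from state a > G, the chain stays at a with probability (1−2α)/(1−α) and moves to a+c with probability α^c for each c ≥ 1; from state a ≤ G, it moves to max(a−1, 0) with probability (1−2α)/(1−α) and to a+c with probability α^c for each c ≥ 1. Assume the initial distribution satisfies Pr[X_0 = c] ≤ (α/(1−2α))·(2α(1−α)/(1−2α))^{c−1} for all c ∈ [1,G] and Pr[X_0 > G] ≤ (α/(1−α))·(2α(1−α)/(1−2α))^G. Then for every ℓ ∈ [0,s]: Pr[X_ℓ = c] ≤ (α/(1−2α))·(2α(1−α)/(1−2α))^{c−1} for each c ∈ [1,G], and Pr[X_ℓ > G] ≤ (ℓ+1)·(α/(1−α))·(2α(1−α)/(1−2α))^G. -/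

import Mathlib

/-!
Write `r = 2α(1-α)/(1-2α) = α + α/(1-2α)` and `q = (1-2α)/(1-α)`, and let `B 0 = 1` and
`B c = α/(1-2α) · r^(c-1)` for `c ≥ 1` (`stateBound`). By induction on `ℓ`, `μ ℓ` stays a
probability vector with `μ ℓ c ≤ B c` for `c ≤ G`. Mass reaches a state `c + 1 ≤ G` only by jumps
up from some `a ≤ c`, at most the geometric convolution `∑_{a ≤ c} B a α^(c+1-a) = α r^c` in total,
and by the step down from `c + 2`, at most `B (c+2) q`; as `α + (α/(1-2α)) r q = α/(1-2α)`, the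
sum is exactly `B (c+1)`. Mass above `G` never returns to `[0, G]`, and the mass jumping from
`[0, G]` above `G` is at most `∑_{a ≤ G} B a α^(G+1-a)/(1-α) = α r^G/(1-α)`, so the tail grows by
at most that much per step.
-/

/-- Transition kernel of the Markov chain: from a state a > G, stay at a with
probability (1-2α)/(1-α) and move to a+c with probability α^c (c ≥ 1); from
a state a ≤ G, move to max(a-1,0) with probability (1-2α)/(1-α) and to a+c
with probability α^c (c ≥ 1). -/
noncomputable def mkKer (α : ℝ) (G a b : ℕ) : ℝ :=
  if a ≤ G then
    (if b = a - 1 then (1 - 2 * α) / (1 - α) else if a < b then α ^ (b - a) else 0)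
  else
    (if b = a then (1 - 2 * α) / (1 - α) else if a < b then α ^ (b - a) else 0)

open Finset

lemma hasSum_tsum_mul_of_nonneg {ι κ : Type*} {μ : ι → ℝ} {K : ι → κ → ℝ}
    (hμ : ∀ a, 0 ≤ μ a) (hK : ∀ a b, 0 ≤ K a b) (hKs : ∀ a, Summable (K a))
    (hs : Summable fun a => μ a * ∑' b, K a b) :
    HasSum (fun b => ∑' a, μ a * K a b) (∑' a, μ a * ∑' b, K a b) := by
  have hF_nonneg : 0 ≤ fun p : ι × κ => μ p.1 * K p.1 p.2 :=
    fun p => mul_nonneg (hμ p.1) (hK p.1 p.2)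
  have hF : Summable fun p : ι × κ => μ p.1 * K p.1 p.2 :=
    (summable_prod_of_nonneg hF_nonneg).2
      ⟨fun a => (hKs a).mul_left (μ a), by simpa only [tsum_mul_left] using hs⟩
  have hcol : Summable fun b => ∑' a, μ a * K a b :=
    ((summable_prod_of_nonneg fun p => hF_nonneg p.swap).1 hF.prod_symm).2
  simpa only [hF.tsum_comm (f := fun a b => μ a * K a b), tsum_mul_left] using hcol.hasSum

lemma tsum_ite_tsum_mul_of_nonneg {ι κ : Type*} {μ : ι → ℝ} {K : ι → κ → ℝ} {p : κ → Prop}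
    [DecidablePred p] (hμ : ∀ a, 0 ≤ μ a) (hK : ∀ a b, 0 ≤ K a b) (hKs : ∀ a, Summable (K a))
    (hs : Summable fun a => μ a * ∑' b, if p b then K a b else 0) :
    ∑' b, (if p b then ∑' a, μ a * K a b else 0)
      = ∑' a, μ a * ∑' b, if p b then K a b else 0 := by
  have hK' : ∀ a b, 0 ≤ if p b then K a b else 0 := fun a b => ite_nonneg (hK a b) le_rfl
  have hKs' : ∀ a, Summable fun b => if p b then K a b else 0 := fun a =>
    Summable.of_nonneg_of_le (hK' a) (fun b => by split_ifs; exacts [le_rfl, hK a b]) (hKs a)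
  rw [← (hasSum_tsum_mul_of_nonneg hμ hK' hKs' hs).tsum_eq]
  refine tsum_congr fun b => ?_
  split_ifs <;> simp

lemma hasSum_geometric_tail {α : ℝ} (h0 : 0 ≤ α) (h1 : α < 1) {a n : ℕ} (ha : a ≤ n) :
    HasSum (fun b : ℕ => if n < b then α ^ (b - a) else 0) (α ^ (n + 1 - a) / (1 - α)) := by
  have hshift : (fun c : ℕ => α ^ (n + 1 - a) * α ^ c)
      = (fun b : ℕ => if n < b then α ^ (b - a) else 0) ∘ (fun c => c + (n + 1)) := by
    funext c
    simp only [Function.comp_apply, if_pos (show n < c + (n + 1) by omega), ← pow_add]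
    congr 1
    omega
  rw [← (add_left_injective (n + 1)).hasSum_iff, ← hshift, div_eq_mul_inv]
  · exact (hasSum_geometric_of_lt_one h0 h1).mul_left _
  · intro b hb
    rw [if_neg]
    exact fun hnb => hb ⟨b - (n + 1), show b - (n + 1) + (n + 1) = b by omega⟩

section Kernel

variable {α : ℝ} {G : ℕ}

lemma mkKer_nonneg (h0 : 0 ≤ α) (h1 : α < 1 / 2) (a b : ℕ) : 0 ≤ mkKer α G a b := by
  have : 0 ≤ (1 - 2 * α) / (1 - α) := div_nonneg (by linarith) (by linarith)
  unfold mkKer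
  split_ifs <;> first | exact this | positivity

lemma hasSum_mkKer (h0 : 0 ≤ α) (h1 : α < 1 / 2) (a : ℕ) : HasSum (mkKer α G a) 1 := by
  have hsplit : mkKer α G a = fun b =>
      (if b = (if a ≤ G then a - 1 else a) then (1 - 2 * α) / (1 - α) else 0)
        + (if a < b then α ^ (b - a) else 0) := by
    funext b
    unfold mkKer
    split_ifs <;> first | (exfalso; omega) | ring
  have hsum := (hasSum_ite_eq (if a ≤ G then a - 1 else a) ((1 - 2 * α) / (1 - α))).add
    (hasSum_geometric_tail h0 (by linarith) (le_refl a))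
  rw [hsplit]
  convert hsum using 1
  have : 1 - α ≠ 0 := by linarith
  rw [Nat.add_sub_cancel_left, pow_one]
  field_simp
  ring

lemma hasSum_mkKer_tail (h0 : 0 ≤ α) (h1 : α < 1 / 2) {a : ℕ} (ha : a ≤ G) :
    HasSum (fun b => if G < b then mkKer α G a b else 0) (α ^ (G + 1 - a) / (1 - α)) := by
  convert hasSum_geometric_tail h0 (by linarith) ha using 2 with b
  unfold mkKer
  split_ifs <;> first | rfl | (exfalso; omega)

lemma tsum_mkKer_tail_le_one (h0 : 0 ≤ α) (h1 : α < 1 / 2) (a : ℕ) :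
    ∑' b, (if G < b then mkKer α G a b else 0) ≤ 1 := by
  have hle : ∀ b, (if G < b then mkKer α G a b else 0) ≤ mkKer α G a b := fun b => by
    split_ifs
    exacts [le_rfl, mkKer_nonneg h0 h1 a b]
  have hnonneg : ∀ b, 0 ≤ if G < b then mkKer α G a b else 0 :=
    fun b => ite_nonneg (mkKer_nonneg h0 h1 a b) le_rfl
  exact hasSum_le hle
    (Summable.of_nonneg_of_le hnonneg hle (hasSum_mkKer h0 h1 a).summable).hasSum
    (hasSum_mkKer h0 h1 a)

end Kernel

noncomputable def stateBound (α : ℝ) : ℕ → ℝ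
  | 0 => 1
  | a + 1 => α / (1 - 2 * α) * (2 * α * (1 - α) / (1 - 2 * α)) ^ a

section StateBound

variable {α : ℝ}

lemma stateBound_nonneg (h0 : 0 ≤ α) (h1 : α < 1 / 2) : ∀ a, 0 ≤ stateBound α a
  | 0 => zero_le_one
  | a + 1 => by
    have : 0 < 1 - 2 * α := by linarith
    have : 0 ≤ 1 - α := by linarith
    unfold stateBound
    positivity

lemma stateBound_of_one_le {c : ℕ} (hc : 1 ≤ c) :
    stateBound α c = α / (1 - 2 * α) * (2 * α * (1 - α) / (1 - 2 * α)) ^ (c - 1) := by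
  obtain ⟨k, rfl⟩ := Nat.exists_eq_add_of_le' hc
  rfl

lemma sum_range_stateBound_mul_pow (hα : 1 - 2 * α ≠ 0) (n : ℕ) :
    ∑ a ∈ range (n + 1), stateBound α a * α ^ (n + 1 - a)
      = α * (2 * α * (1 - α) / (1 - 2 * α)) ^ n := by
  induction n with
  | zero => simp [stateBound]
  | succ n ih =>
    have hshift : ∑ a ∈ range (n + 1), stateBound α a * α ^ (n + 1 + 1 - a)
        = α * ∑ a ∈ range (n + 1), stateBound α a * α ^ (n + 1 - a) := by
      rw [mul_sum]
      refine sum_congr rfl fun a ha => ?_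
      rw [show n + 1 + 1 - a = n + 1 - a + 1 by have := mem_range.1 ha; omega, pow_succ]
      ring
    have hratio : 2 * α * (1 - α) / (1 - 2 * α) = α + α / (1 - 2 * α) := by
      field_simp
      ring
    rw [sum_range_succ, hshift, ih, Nat.add_sub_cancel_left, pow_one, stateBound, pow_succ,
      hratio]
    ring

lemma hasSum_stateBound_mul_pow (hα : 1 - 2 * α ≠ 0) (n : ℕ) :
    HasSum (fun a => if a < n + 1 then stateBound α a * α ^ (n + 1 - a) else 0)
      (α * (2 * α * (1 - α) / (1 - 2 * α)) ^ n) := by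
  have hfin := hasSum_sum_of_ne_finset_zero (L := .unconditional ℕ) (s := range (n + 1))
    (f := fun a => if a < n + 1 then stateBound α a * α ^ (n + 1 - a) else 0)
    fun a ha => if_neg (by simpa using ha)
  rwa [sum_congr rfl fun a ha => if_pos (mem_range.1 ha), sum_range_stateBound_mul_pow hα n]
    at hfin

lemma stateBound_succ_eq (h2 : 1 - 2 * α ≠ 0) (h1 : 1 - α ≠ 0) (k : ℕ) :
    α * (2 * α * (1 - α) / (1 - 2 * α)) ^ k + stateBound α (k + 2) * ((1 - 2 * α) / (1 - α))
      = stateBound α (k + 1) := by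
  have hfix : α + α / (1 - 2 * α) * (2 * α * (1 - α) / (1 - 2 * α)) * ((1 - 2 * α) / (1 - α))
      = α / (1 - 2 * α) := by
    grind
  simp only [stateBound]
  linear_combination (2 * α * (1 - α) / (1 - 2 * α)) ^ k * hfix

end StateBound

structure ChainBound (α : ℝ) (G : ℕ) (t : ℝ) (μ : ℕ → ℝ) : Prop where
  nonneg : ∀ b, 0 ≤ μ b
  hasSum_one : HasSum μ 1
  le_stateBound : ∀ c ≤ G, μ c ≤ stateBound α c
  tail_le : ∑' b, (if G < b then μ b else 0) ≤ t

namespace ChainBound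

variable {α : ℝ} {G : ℕ} {t : ℝ} {μ : ℕ → ℝ}

lemma of_tsum_eq_one (hμ0 : ∀ b, 0 ≤ μ b) (hμ1 : ∑' b, μ b = 1)
    (hμc : ∀ c, 1 ≤ c → c ≤ G →
      μ c ≤ α / (1 - 2 * α) * (2 * α * (1 - α) / (1 - 2 * α)) ^ (c - 1))
    (htail : ∑' b, (if G < b then μ b else 0) ≤ t) : ChainBound α G t μ := by
  have hs : Summable μ := by
    by_contra h
    rw [tsum_eq_zero_of_not_summable h] at hμ1
    exact zero_ne_one hμ1
  have hμ : HasSum μ 1 := hμ1 ▸ hs.hasSum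
  refine ⟨hμ0, hμ, fun c hc => ?_, htail⟩
  rcases Nat.eq_zero_or_pos c with rfl | hc1
  · exact le_hasSum hμ 0 fun b _ => hμ0 b
  · exact (stateBound_of_one_le hc1).symm ▸ hμc c hc1 hc

lemma hasSum_step (h0 : 0 ≤ α) (h1 : α < 1 / 2) (hμ : ChainBound α G t μ) :
    HasSum (fun b => ∑' a, μ a * mkKer α G a b) 1 := by
  have hrow : ∀ a, ∑' b, mkKer α G a b = 1 := fun a => (hasSum_mkKer h0 h1 a).tsum_eq
  simpa only [hrow, mul_one, hμ.hasSum_one.tsum_eq] using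
    hasSum_tsum_mul_of_nonneg hμ.nonneg (mkKer_nonneg (G := G) h0 h1)
      (fun a => (hasSum_mkKer h0 h1 a).summable)
      (by simpa only [hrow, mul_one] using hμ.hasSum_one.summable)

lemma step_le_stateBound_succ (h0 : 0 ≤ α) (h1 : α < 1 / 2) (hμ : ChainBound α G t μ)
    {k : ℕ} (hk : k + 1 ≤ G) :
    ∑' a, μ a * mkKer α G a (k + 1) ≤ stateBound α (k + 1) := by
  set q := (1 - 2 * α) / (1 - α)
  have hq : 0 ≤ q := div_nonneg (by linarith) (by linarith)
  have hB := stateBound_nonneg h0 h1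
  set g : ℕ → ℝ := fun a => (if a < k + 1 then stateBound α a * α ^ (k + 1 - a) else 0)
    + (if a = k + 2 then stateBound α (k + 2) * q else 0) with hg_def
  -- only the jumps up from `a ≤ k` and the step down from `k + 2` reach `k + 1`
  have hle : ∀ a, μ a * mkKer α G a (k + 1) ≤ g a := by
    intro a
    simp only [hg_def, mkKer]
    split_ifs <;> subst_vars <;> (try simp only [mul_zero, zero_add, add_zero, le_refl]) <;> first
      | (exfalso; omega)
      | exact le_rfl
      | exact mul_nonneg (hB _) hq
      | exact mul_le_mul_of_nonneg_right (hμ.le_stateBound _ (by omega)) hq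
      | exact mul_le_mul_of_nonneg_right (hμ.le_stateBound _ (by omega)) (pow_nonneg h0 _)
  have hg : HasSum g (α * (2 * α * (1 - α) / (1 - 2 * α)) ^ k + stateBound α (k + 2) * q) :=
    (hasSum_stateBound_mul_pow (by linarith) k).add (hasSum_ite_eq _ _)
  have hnonneg : ∀ a, 0 ≤ μ a * mkKer α G a (k + 1) :=
    fun a => mul_nonneg (hμ.nonneg a) (mkKer_nonneg h0 h1 a _)
  calc ∑' a, μ a * mkKer α G a (k + 1)
      ≤ α * (2 * α * (1 - α) / (1 - 2 * α)) ^ k + stateBound α (k + 2) * q :=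
        hasSum_le hle (Summable.of_nonneg_of_le hnonneg hle hg.summable).hasSum hg
    _ = stateBound α (k + 1) := stateBound_succ_eq (by linarith) (by linarith) k

lemma mul_tsum_mkKer_tail_le (h0 : 0 ≤ α) (h1 : α < 1 / 2) (hμ : ChainBound α G t μ) (a : ℕ) :
    μ a * ∑' b, (if G < b then mkKer α G a b else 0)
      ≤ (if a < G + 1 then stateBound α a * α ^ (G + 1 - a) else 0) / (1 - α)
        + (if G < a then μ a else 0) := by
  by_cases ha : a < G + 1
  · rw [(hasSum_mkKer_tail h0 h1 (Nat.lt_succ_iff.1 ha)).tsum_eq, if_pos ha,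
      if_neg (by omega), add_zero, mul_div_assoc', div_le_div_iff_of_pos_right (by linarith)]
    exact mul_le_mul_of_nonneg_right (hμ.le_stateBound a (by omega)) (pow_nonneg h0 _)
  · rw [if_neg ha, if_pos (by omega), zero_div, zero_add]
    exact mul_le_of_le_one_right (hμ.nonneg a) (tsum_mkKer_tail_le_one h0 h1 a)

lemma step_tail_le (h0 : 0 ≤ α) (h1 : α < 1 / 2) (hμ : ChainBound α G t μ) :
    ∑' b, (if G < b then ∑' a, μ a * mkKer α G a b else 0)
      ≤ t + α / (1 - α) * (2 * α * (1 - α) / (1 - 2 * α)) ^ G := by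
  have htail : HasSum (fun b => if G < b then μ b else 0) (∑' b, if G < b then μ b else 0) :=
    (Summable.of_nonneg_of_le (fun b => ite_nonneg (hμ.nonneg b) le_rfl)
      (fun b => by split_ifs; exacts [le_rfl, hμ.nonneg b]) hμ.hasSum_one.summable).hasSum
  have hbound := ((hasSum_stateBound_mul_pow (by linarith) G).div_const (1 - α)).add htail
  have hs : Summable fun a => μ a * ∑' b, (if G < b then mkKer α G a b else 0) :=
    Summable.of_nonneg_of_le
      (fun a => mul_nonneg (hμ.nonneg a) (tsum_nonneg fun b => ite_nonneg
        (mkKer_nonneg h0 h1 a b) le_rfl))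
      (hμ.mul_tsum_mkKer_tail_le h0 h1) hbound.summable
  calc ∑' b, (if G < b then ∑' a, μ a * mkKer α G a b else 0)
      = ∑' a, μ a * ∑' b, (if G < b then mkKer α G a b else 0) :=
        tsum_ite_tsum_mul_of_nonneg hμ.nonneg (mkKer_nonneg h0 h1)
          (fun a => (hasSum_mkKer h0 h1 a).summable) hs
    _ ≤ α * (2 * α * (1 - α) / (1 - 2 * α)) ^ G / (1 - α) + ∑' b, if G < b then μ b else 0 :=
        hasSum_le (hμ.mul_tsum_mkKer_tail_le h0 h1) hs.hasSum hbound
    _ ≤ t + α / (1 - α) * (2 * α * (1 - α) / (1 - 2 * α)) ^ G := by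
        rw [div_mul_eq_mul_div, mul_div_right_comm]
        linarith [hμ.tail_le]

lemma step (h0 : 0 ≤ α) (h1 : α < 1 / 2) (hμ : ChainBound α G t μ) :
    ChainBound α G (t + α / (1 - α) * (2 * α * (1 - α) / (1 - 2 * α)) ^ G)
      (fun b => ∑' a, μ a * mkKer α G a b) where
  nonneg b := tsum_nonneg fun a => mul_nonneg (hμ.nonneg a) (mkKer_nonneg h0 h1 a b)
  hasSum_one := hμ.hasSum_step h0 h1
  le_stateBound
    | 0, _ => le_hasSum (hμ.hasSum_step h0 h1) 0 fun b _ =>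
        tsum_nonneg fun a => mul_nonneg (hμ.nonneg a) (mkKer_nonneg h0 h1 a b)
    | _ + 1, hk => hμ.step_le_stateBound_succ h0 h1 hk
  tail_le := hμ.step_tail_le h0 h1

end ChainBound

/-- for α sufficiently small, if the chain μ evolves by the
kernel above and the initial distribution satisfies the stated bounds, then
for every ℓ ∈ [0,s]:
Pr[X_ℓ = c] ≤ (α/(1-2α))·(2α(1-α)/(1-2α))^{c-1} for each c ∈ [1,G], and
Pr[X_ℓ > G] ≤ (ℓ+1)·(α/(1-α))·(2α(1-α)/(1-2α))^G. -/
theorem stmt15 :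
    ∃ α0 : ℝ, 0 < α0 ∧ ∀ α : ℝ, 0 < α → α < α0 →
      ∀ (G s : ℕ) (μ : ℕ → ℕ → ℝ),
        (∀ b, 0 ≤ μ 0 b) →
        (∑' b, μ 0 b) = 1 →
        (∀ ℓ b, μ (ℓ + 1) b = ∑' a, μ ℓ a * mkKer α G a b) →
        (∀ c, 1 ≤ c → c ≤ G →
          μ 0 c ≤ α / (1 - 2 * α) * (2 * α * (1 - α) / (1 - 2 * α)) ^ (c - 1)) →
        ((∑' b, if G < b then μ 0 b else 0)
          ≤ α / (1 - α) * (2 * α * (1 - α) / (1 - 2 * α)) ^ G) →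
        ∀ ℓ ≤ s,
          (∀ c, 1 ≤ c → c ≤ G →
            μ ℓ c ≤ α / (1 - 2 * α) * (2 * α * (1 - α) / (1 - 2 * α)) ^ (c - 1)) ∧
          (∑' b, if G < b then μ ℓ b else 0)
            ≤ ((ℓ : ℝ) + 1) * (α / (1 - α)) * (2 * α * (1 - α) / (1 - 2 * α)) ^ G := by
  refine ⟨1 / 2, one_half_pos, fun α hα0 hα G s μ h0_nonneg h0_sum hμ_step h0_le h0_tail ℓ _ => ?_⟩
  have hbound : ∀ ℓ : ℕ, ChainBound α G
      (((ℓ : ℝ) + 1) * (α / (1 - α)) * (2 * α * (1 - α) / (1 - 2 * α)) ^ G) (μ ℓ) := by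
    intro ℓ
    induction ℓ with
    | zero => simpa using ChainBound.of_tsum_eq_one h0_nonneg h0_sum h0_le h0_tail
    | succ ℓ ih =>
      rw [funext (hμ_step ℓ)]
      convert ih.step hα0.le hα using 1
      push_cast
      ring
  refine ⟨fun c hc1 hcG => ?_, (hbound ℓ).tail_le⟩
  rw [← stateBound_of_one_le hc1]
  exact (hbound ℓ).le_stateBound c hcG
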